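/- For real ε and h > 0, the 2×2 matrix T(ε) = e^{−iπ/4} ℰ(ε) · [[1, i e^{−επ}], [i e^{−επ}, 1]], where ℰ(ε) = (2π)^{−1/2} Γ(½+iε) e^{ε(π/2 + i ln h)}, is unitary. -/

import Mathlib

open Complex Real Matrix

/-- ℰ(ε) = (2π)^{−1/2} Γ(½+iε) e^{ε(π/2 + i ln h)}. -/
noncomputable def scrE (h ε : ℝ) : ℂ :=
  (((2 * Real.pi) ^ (-(1 : ℝ) / 2) : ℝ) : ℂ) *
    Complex.Gamma (1 / 2 + ε * Complex.I) *
    Complex.exp (ε * ((Real.pi / 2 : ℝ) + Complex.I * (Real.log h : ℝ)))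

/-- T(ε) = e^{−iπ/4} ℰ(ε) [[1, i e^{−επ}], [i e^{−επ}, 1]]. -/
noncomputable def Tmat (h ε : ℝ) : Matrix (Fin 2) (Fin 2) ℂ :=
  Complex.exp (-(Real.pi / 4 : ℝ) * Complex.I) • scrE h ε •
    !![1, Complex.I * (Real.exp (-ε * Real.pi) : ℝ);
       Complex.I * (Real.exp (-ε * Real.pi) : ℝ), 1]

/-!
With `a = e^{-επ}`, the matrix `[[1, i a], [i a, 1]]` satisfies `M* M = (1 + a²) I`, since the
off-diagonal entries `i a` and `conj (i a) = -i a` cancel. By the reflection formula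
`|Γ(½+iε)|² = π / cosh(πε)`, so `|ℰ(ε)|² = e^{επ} / (2 cosh πε) = 1 / (1 + a²)`, and the unimodular
phase `e^{-iπ/4}` does not matter.
-/

open ComplexConjugate

theorem Matrix.smul_mem_unitaryGroup_of_star_mul_self {n R : Type*} [Fintype n] [DecidableEq n]
    [CommRing R] [StarRing R] {M : Matrix n n R} {c r : R} (hM : star M * M = r • 1)
    (hc : star c * c * r = 1) : c • M ∈ unitaryGroup n R := by
  rw [mem_unitaryGroup_iff', star_smul, smul_mul_smul_comm, hM, smul_smul, hc, one_smul]

theorem Matrix.star_mul_self_fin_two_I_offDiag (a : ℝ) :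
    star !![1, I * a; I * a, 1] * !![1, I * a; I * a, 1] =
      ((1 + a ^ 2 : ℝ) : ℂ) • (1 : Matrix (Fin 2) (Fin 2) ℂ) := by
  rw [star_eq_conjTranspose, one_fin_two]
  ext i j
  fin_cases i <;> fin_cases j <;>
    simp only [Fin.zero_eta, Fin.mk_one, mul_apply, Fin.sum_univ_two, conjTranspose_apply, of_apply,
      cons_val', cons_val_zero, cons_val_one, cons_val_fin_one, RCLike.star_def, map_mul, conj_I,
      conj_ofReal, map_one, Matrix.smul_apply, smul_eq_mul, ofReal_add, ofReal_pow, ofReal_one]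
  · linear_combination (-(a : ℂ) ^ 2) * I_sq
  · ring
  · ring
  · linear_combination (-(a : ℂ) ^ 2) * I_sq

theorem Complex.normSq_Gamma_one_half_add_mul_I (t : ℝ) :
    normSq (Gamma (1 / 2 + t * I)) = π / Real.cosh (π * t) := by
  have hconj : conj (Gamma (1 / 2 + t * I)) = Gamma (1 - (1 / 2 + t * I)) := by
    rw [← Gamma_conj]
    congr 1
    simp only [map_add, map_mul, conj_ofReal, conj_I, map_div₀, map_one, map_ofNat]
    ring
  have hsin : sin (π * (1 / 2 + t * I)) = Real.cosh (π * t) := by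
    rw [show (π : ℂ) * (1 / 2 + t * I) = (π / 2 : ℝ) + (π * t : ℝ) * I by push_cast; ring,
      sin_add, sin_mul_I, cos_mul_I]
    simp [ofReal_cosh]
  apply ofReal_injective
  rw [normSq_eq_conj_mul_self, hconj, mul_comm, Gamma_mul_Gamma_one_sub, hsin, ofReal_div]

theorem normSq_scrE_mul_one_add_exp_sq (h ε : ℝ) :
    normSq (scrE h ε) * (1 + Real.exp (-ε * π) ^ 2) = 1 := by
  have hpow : normSq (((2 * π) ^ (-(1 : ℝ) / 2) : ℝ) : ℂ) = (2 * π)⁻¹ := by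
    rw [normSq_ofReal, ← Real.rpow_add (by positivity)]
    norm_num [Real.rpow_neg_one]
  have hexp : normSq (exp (ε * ((π / 2 : ℝ) + I * (Real.log h : ℝ)))) = Real.exp (ε * π) := by
    rw [normSq_eq_norm_sq, norm_exp, re_ofReal_mul, add_re, ofReal_re, mul_comm I, mul_I_re,
      ofReal_im, neg_zero, add_zero, ← Real.exp_nat_mul]
    congr 1
    push_cast
    ring
  rw [scrE, map_mul, map_mul, hpow, normSq_Gamma_one_half_add_mul_I, hexp, Real.cosh_eq]
  have hinv : Real.exp (π * ε) * Real.exp (-(π * ε)) = 1 := by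
    rw [← Real.exp_add, add_neg_cancel, Real.exp_zero]
  rw [show -ε * π = -(π * ε) by ring, mul_comm ε π]
  field_simp
  linear_combination Real.exp (-(π * ε)) * hinv

theorem stmt7_general (h ε : ℝ) :
    Tmat h ε ∈ Matrix.unitaryGroup (Fin 2) ℂ := by
  have hphase : normSq (exp (-(π / 4 : ℝ) * I)) = 1 := by
    rw [normSq_eq_norm_sq, ← ofReal_neg, norm_exp_ofReal_mul_I, one_pow]
  rw [Tmat, smul_smul]
  refine smul_mem_unitaryGroup_of_star_mul_self (star_mul_self_fin_two_I_offDiag _) ?_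
  rw [star_def, ← normSq_eq_conj_mul_self, map_mul, hphase, one_mul, ← ofReal_mul,
    normSq_scrE_mul_one_add_exp_sq, ofReal_one]

/-- For real ε and h > 0 the matrix T(ε) is unitary. -/
theorem stmt7 (h ε : ℝ) (hh : 0 < h) :
    Tmat h ε ∈ Matrix.unitaryGroup (Fin 2) ℂ :=
  stmt7_general h ε
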